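/- arXiv:1411.6532 — 3 statements merged into one kernel-verified Lean document; each statement's English description precedes it below -/
import Mathlib

section
/- Let G be a simple connected graph on vertex set V = {1,...,n} with at least one pair of distinct nonadjacent vertices, and let λ and μ be real numbers such that every pair of adjacent vertices of G has at least λ common neighbors and every pair of distinct nonadjacent vertices of G has at least μ common neighbors. Then the largest Laplacian eigenvalue satisfies ℓ_1(G) ≤ max_i { ( 2d_i − λ + μ + sqrt( 4 d_i m_i − 4(λ−μ)d_i + (λ−μ)² − 4μn ) ) / 2 }, where the maximum is taken over those vertices i for which the expression under the square root is nonnegative. -/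
/-!
If `L x = ℓ x`, then `A x = (D - ℓ) x`, so `∑ (dᵢ - ℓ)² xᵢ² = ‖A x‖² = xᵀ A² x`, where
`(A²)ⱼₖ` counts the common neighbours of `j` and `k`. For a symmetric `c`,
`xᵀ c x = ∑ⱼ (∑ₖ cⱼₖ) xⱼ² - ½ ∑ⱼₖ cⱼₖ (xⱼ - xₖ)²`; bounding `(A²)ⱼₖ` below by `λ` on edges
and by `μ` on non-edges, and evaluating the resulting sums by `xᵀ L x = ℓ ‖x‖²` and
`∑ⱼₖ (xⱼ - xₖ)² = 2 (n ‖x‖² - (∑ x)²)`, gives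
`∑ᵢ ((dᵢ - ℓ)² - dᵢ mᵢ - (μ - λ) ℓ + μ n) xᵢ² ≤ μ (∑ x)²`.
The right side is `≤ 0`: trivially if `μ ≤ 0`, and otherwise two nonadjacent vertices have a
common neighbour, so `G` has an edge, `ℓ₁ > 0`, and the eigenvectors of `ℓ₁` are orthogonal to
`1`. Hence some vertex satisfies `(dᵢ - ℓ₁)² ≤ dᵢ mᵢ + (μ - λ) ℓ₁ - μ n`, and `ℓ₁` lies below
the larger root of this quadratic.
-/

open Finset Matrix

theorem sum_sum_mul_mul_eq_of_symm {ι : Type*} [Fintype ι] {c : ι → ι → ℝ}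
    (hc : ∀ j k, c j k = c k j) (x : ι → ℝ) :
    ∑ j, ∑ k, c j k * (x j * x k) =
      ∑ j, (∑ k, c j k) * x j ^ 2 - (∑ j, ∑ k, c j k * (x j - x k) ^ 2) / 2 := by
  have hswap : ∑ j, ∑ k, c j k * x k ^ 2 = ∑ j, ∑ k, c j k * x j ^ 2 := by
    rw [sum_comm]; simp only [hc]
  have hexpand : ∑ j, ∑ k, c j k * (x j - x k) ^ 2 =
      ∑ j, ∑ k, c j k * x j ^ 2 + ∑ j, ∑ k, c j k * x k ^ 2
        - 2 * ∑ j, ∑ k, c j k * (x j * x k) := by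
    simp only [mul_sum, ← sum_add_distrib, ← sum_sub_distrib]
    exact sum_congr rfl fun j _ => sum_congr rfl fun k _ => by ring
  rw [hexpand, hswap]
  simp only [sum_mul]
  ring

theorem exists_le_of_sum_mul_sq_le {ι : Type*} [Fintype ι] {f g x : ι → ℝ} (hx : x ≠ 0)
    (h : ∑ i, f i * x i ^ 2 ≤ ∑ i, g i * x i ^ 2) : ∃ i, f i ≤ g i := by
  by_contra! hlt
  obtain ⟨i, hi⟩ := Function.ne_iff.mp hx
  refine h.not_gt (sum_lt_sum (fun j _ => ?_) ⟨i, mem_univ i, ?_⟩)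
  · exact mul_le_mul_of_nonneg_right (hlt j).le (sq_nonneg _)
  · exact mul_lt_mul_of_pos_right (hlt i) (sq_pos_of_ne_zero hi)

theorem le_quadratic_root {ℓ p q : ℝ} (h : ℓ ^ 2 - p * ℓ + q ≤ 0) :
    0 ≤ p ^ 2 - 4 * q ∧ ℓ ≤ (p + √(p ^ 2 - 4 * q)) / 2 := by
  have hsq : (2 * ℓ - p) ^ 2 ≤ p ^ 2 - 4 * q := by linear_combination 4 * h
  exact ⟨(sq_nonneg _).trans hsq, by linarith [Real.le_sqrt_of_sq_le hsq]⟩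

namespace SimpleGraph

variable {V : Type*} [Fintype V] [DecidableEq V] (G : SimpleGraph V) [DecidableRel G.Adj]

theorem sum_card_neighborFinset_inter (j : V) :
    ∑ k, (#(G.neighborFinset j ∩ G.neighborFinset k) : ℝ) =
      ∑ t ∈ G.neighborFinset j, (G.degree t : ℝ) := by
  have : ∑ k, #(G.neighborFinset j ∩ G.neighborFinset k) =
      ∑ t ∈ G.neighborFinset j, G.degree t := by
    simp only [card_eq_sum_ones, ← card_neighborFinset_eq_degree]
    exact sum_comm' fun k t => by simp [G.adj_comm, and_comm]
  exact_mod_cast this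

theorem sum_sq_sum_neighborFinset (x : V → ℝ) :
    ∑ t, (∑ j ∈ G.neighborFinset t, x j) ^ 2 =
      ∑ j, ∑ k, (#(G.neighborFinset j ∩ G.neighborFinset k) : ℝ) * (x j * x k) := by
  calc ∑ t, (∑ j ∈ G.neighborFinset t, x j) ^ 2
      = ∑ t, ∑ j ∈ G.neighborFinset t, ∑ k ∈ G.neighborFinset t, x j * x k := by
        simp only [sq, sum_mul_sum]
    _ = ∑ j, ∑ t ∈ G.neighborFinset j, ∑ k ∈ G.neighborFinset t, x j * x k :=
        sum_comm' fun t j => by simp [G.adj_comm]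
    _ = ∑ j, ∑ k, ∑ _t ∈ G.neighborFinset j ∩ G.neighborFinset k, x j * x k :=
        sum_congr rfl fun j _ => sum_comm' fun t k => by simp [G.adj_comm]
    _ = _ := by simp only [sum_const, nsmul_eq_mul]

variable {G} {ℓ : ℝ} {x : V → ℝ}

theorem sum_neighborFinset_eq_of_lapMatrix_mulVec_eq (hx : G.lapMatrix ℝ *ᵥ x = ℓ • x) (i : V) :
    ∑ j ∈ G.neighborFinset i, x j = (G.degree i - ℓ) * x i := by
  have := congrFun hx i
  rw [lapMatrix_mulVec_apply, Pi.smul_apply, smul_eq_mul] at this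
  linear_combination -this

theorem sum_sum_adj_sub_sq_eq_of_lapMatrix_mulVec_eq (hx : G.lapMatrix ℝ *ᵥ x = ℓ • x) :
    (∑ i, ∑ j, if G.Adj i j then (x i - x j) ^ 2 else 0) = 2 * ℓ * ∑ i, x i ^ 2 := by
  have := G.lapMatrix_toLinearMap₂' ℝ x
  rw [toLinearMap₂'_apply', hx, dotProduct_smul, smul_eq_mul] at this
  simp only [dotProduct, ← sq] at this
  linarith

theorem mul_sum_eq_zero_of_lapMatrix_mulVec_eq (hx : G.lapMatrix ℝ *ᵥ x = ℓ • x) :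
    ℓ * ∑ i, x i = 0 := by
  have h1 : (fun _ ↦ (1 : ℝ)) ⬝ᵥ (G.lapMatrix ℝ *ᵥ x) = 0 := by
    rw [dotProduct_mulVec, ← mulVec_transpose, (G.isSymm_lapMatrix ℝ).eq,
      lapMatrix_mulVec_const_eq_zero, zero_dotProduct]
  rw [hx, dotProduct_smul, smul_eq_mul] at h1
  simpa [dotProduct] using h1

theorem lapMatrix_ne_zero_of_adj {u v : V} (h : G.Adj u v) : G.lapMatrix ℝ ≠ 0 := by
  intro h0
  have := congrFun (congrFun h0 u) v
  simp [lapMatrix, degMatrix, h, h.ne] at this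

theorem exists_lapMatrix_mulVec_eq_pos_smul_of_adj {u v : V} (h : G.Adj u v) :
    ∃ y : V → ℝ, y ≠ 0 ∧ ∃ t : ℝ, 0 < t ∧ G.lapMatrix ℝ *ᵥ y = t • y := by
  have hPSD := posSemidef_lapMatrix ℝ G
  obtain ⟨i, hi⟩ := Function.ne_iff.mp <|
    hPSD.1.eigenvalues_eq_zero_iff.not.mpr (lapMatrix_ne_zero_of_adj h)
  refine ⟨_, (WithLp.ofLp_eq_zero 2).ne.2 <| hPSD.1.eigenvectorBasis.orthonormal.ne_zero i,
    _, (hPSD.eigenvalues_nonneg i).lt_of_ne' hi, ?_⟩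
  simpa using hPSD.1.mulVec_eigenvectorBasis i

theorem sum_degree_sub_sq_mul_sq_le {lam mu : ℝ}
    (hlam : ∀ i j, G.Adj i j → lam ≤ #(G.neighborFinset i ∩ G.neighborFinset j))
    (hmu : ∀ i j, i ≠ j → ¬ G.Adj i j → mu ≤ #(G.neighborFinset i ∩ G.neighborFinset j))
    (hx : G.lapMatrix ℝ *ᵥ x = ℓ • x) :
    ∑ i, ((G.degree i : ℝ) - ℓ) ^ 2 * x i ^ 2 ≤
      ∑ i, (∑ j ∈ G.neighborFinset i, (G.degree j : ℝ) + (mu - lam) * ℓ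
        - mu * Fintype.card V) * x i ^ 2 + mu * (∑ i, x i) ^ 2 := by
  set c : V → V → ℝ := fun j k ↦ #(G.neighborFinset j ∩ G.neighborFinset k)
  have hc : ∀ j k, c j k = c k j := fun j k ↦ by simp only [c, inter_comm]
  have hc_ge : ∀ j k,
      mu * (x j - x k) ^ 2 + (lam - mu) * (if G.Adj j k then (x j - x k) ^ 2 else 0) ≤
        c j k * (x j - x k) ^ 2 := by
    intro j k
    by_cases hjk : j = k
    · simp [hjk]
    by_cases hadj : G.Adj j k
    · simp only [hadj, if_true]
      nlinarith [hlam j k hadj, sq_nonneg (x j - x k)]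
    · simp only [hadj, if_false]
      nlinarith [hmu j k hjk hadj, sq_nonneg (x j - x k)]
  have hall :
      ∑ j, ∑ k, (x j - x k) ^ 2 = 2 * (Fintype.card V * ∑ j, x j ^ 2 - (∑ j, x j) ^ 2) := by
    have := sum_sum_mul_mul_eq_of_symm (c := fun _ _ ↦ (1 : ℝ)) (fun _ _ ↦ rfl) x
    simp only [one_mul, sum_const, card_univ, nsmul_eq_mul, mul_one, ← mul_sum] at this
    rw [← sum_mul, ← sq] at this
    linarith
  calc ∑ i, ((G.degree i : ℝ) - ℓ) ^ 2 * x i ^ 2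
      = ∑ t, (∑ j ∈ G.neighborFinset t, x j) ^ 2 := by
        simp only [sum_neighborFinset_eq_of_lapMatrix_mulVec_eq hx, mul_pow]
    _ = ∑ j, (∑ k, c j k) * x j ^ 2 - (∑ j, ∑ k, c j k * (x j - x k) ^ 2) / 2 := by
        rw [sum_sq_sum_neighborFinset, sum_sum_mul_mul_eq_of_symm hc]
    _ ≤ ∑ j, (∑ k, c j k) * x j ^ 2 - (∑ j, ∑ k, (mu * (x j - x k) ^ 2
          + (lam - mu) * (if G.Adj j k then (x j - x k) ^ 2 else 0))) / 2 := by
        gcongr with j _ k _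
        exact hc_ge j k
    _ = _ := by
        simp only [sum_add_distrib, ← mul_sum, hall, c, sum_card_neighborFinset_inter,
          sum_sum_adj_sub_sq_eq_of_lapMatrix_mulVec_eq hx, add_mul, sub_mul, sum_sub_distrib]
        ring

end SimpleGraph

theorem laplacian_index_upper_bound_general (n : ℕ) (G : SimpleGraph (Fin n)) [DecidableRel G.Adj]
    (hnoncomplete : ∃ i j : Fin n, i ≠ j ∧ ¬ G.Adj i j)
    (lam mu : ℝ)
    (hlam : ∀ i j : Fin n, G.Adj i j →
      lam ≤ ((G.neighborFinset i ∩ G.neighborFinset j).card : ℝ))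
    (hmu : ∀ i j : Fin n, i ≠ j → ¬ G.Adj i j →
      mu ≤ ((G.neighborFinset i ∩ G.neighborFinset j).card : ℝ))
    (ℓ₁ : ℝ)
    (hℓ₁ : IsGreatest {l : ℝ | ∃ X : Fin n → ℝ, X ≠ 0 ∧
      (G.lapMatrix ℝ).mulVec X = l • X} ℓ₁) :
    ∃ i : Fin n,
      0 ≤ 4 * (∑ j ∈ G.neighborFinset i, (G.degree j : ℝ))
          - 4 * (lam - mu) * (G.degree i : ℝ) + (lam - mu) ^ 2 - 4 * mu * (n : ℝ) ∧
      ℓ₁ ≤ (2 * (G.degree i : ℝ) - lam + mu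
        + Real.sqrt (4 * (∑ j ∈ G.neighborFinset i, (G.degree j : ℝ))
          - 4 * (lam - mu) * (G.degree i : ℝ) + (lam - mu) ^ 2 - 4 * mu * (n : ℝ))) / 2 := by
  obtain ⟨x, hx0, hx⟩ := hℓ₁.1
  have hsum : mu * (∑ i, x i) ^ 2 ≤ 0 := by
    rcases le_or_gt mu 0 with hmu0 | hmu0
    · exact mul_nonpos_of_nonpos_of_nonneg hmu0 (sq_nonneg _)
    obtain ⟨u, v, huv, hnadj⟩ := hnoncomplete
    obtain ⟨t, ht⟩ : (G.neighborFinset u ∩ G.neighborFinset v).Nonempty :=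
      card_pos.mp (by exact_mod_cast hmu0.trans_le (hmu u v huv hnadj))
    obtain ⟨y, hy0, s, hs, hy⟩ := G.exists_lapMatrix_mulVec_eq_pos_smul_of_adj
      ((G.mem_neighborFinset u t).mp (mem_inter.mp ht).1)
    have hℓ₁0 : ℓ₁ ≠ 0 := (hs.trans_le (hℓ₁.2 ⟨y, hy0, hy⟩)).ne'
    have hx_sum := (mul_eq_zero.mp (G.mul_sum_eq_zero_of_lapMatrix_mulVec_eq hx)).resolve_left hℓ₁0
    simp [hx_sum]
  obtain ⟨i, hi⟩ := exists_le_of_sum_mul_sq_le hx0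
    ((SimpleGraph.sum_degree_sub_sq_mul_sq_le hlam hmu hx).trans (by linarith))
  rw [Fintype.card_fin] at hi
  obtain ⟨hr, hℓ⟩ := le_quadratic_root (ℓ := ℓ₁) (p := 2 * (G.degree i : ℝ) - lam + mu)
    (q := (G.degree i : ℝ) ^ 2 - ∑ j ∈ G.neighborFinset i, (G.degree j : ℝ) + mu * n)
    (by linear_combination hi)
  have hdisc : (2 * (G.degree i : ℝ) - lam + mu) ^ 2
      - 4 * ((G.degree i : ℝ) ^ 2 - ∑ j ∈ G.neighborFinset i, (G.degree j : ℝ) + mu * n) =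
      4 * (∑ j ∈ G.neighborFinset i, (G.degree j : ℝ)) - 4 * (lam - mu) * (G.degree i : ℝ)
        + (lam - mu) ^ 2 - 4 * mu * (n : ℝ) := by ring
  rw [hdisc] at hr hℓ
  exact ⟨i, hr, hℓ⟩

/-- **Corollary (upper bound on the Laplacian index).** For a simple connected
non-complete graph `G` and reals `λ ≤ λ(G)`, `μ ≤ μ(G)`, the largest Laplacian
eigenvalue `ℓ₁(G)` satisfies
`ℓ₁(G) ≤ max_i (2d_i − λ + μ + √(4 d_i m_i − 4(λ−μ)d_i + (λ−μ)² − 4μn))/2`,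
the maximum being over vertices with nonnegative radicand. -/
theorem laplacian_index_upper_bound (n : ℕ) (G : SimpleGraph (Fin n)) [DecidableRel G.Adj]
    (hconn : G.Connected)
    (hnoncomplete : ∃ i j : Fin n, i ≠ j ∧ ¬ G.Adj i j)
    (lam mu : ℝ)
    (hlam : ∀ i j : Fin n, G.Adj i j →
      lam ≤ ((G.neighborFinset i ∩ G.neighborFinset j).card : ℝ))
    (hmu : ∀ i j : Fin n, i ≠ j → ¬ G.Adj i j →
      mu ≤ ((G.neighborFinset i ∩ G.neighborFinset j).card : ℝ))
    (ℓ₁ : ℝ)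
    (hℓ₁ : IsGreatest {l : ℝ | ∃ X : Fin n → ℝ, X ≠ 0 ∧
      (G.lapMatrix ℝ).mulVec X = l • X} ℓ₁) :
    ∃ i : Fin n,
      0 ≤ 4 * (∑ j ∈ G.neighborFinset i, (G.degree j : ℝ))
          - 4 * (lam - mu) * (G.degree i : ℝ) + (lam - mu) ^ 2 - 4 * mu * (n : ℝ) ∧
      ℓ₁ ≤ (2 * (G.degree i : ℝ) - lam + mu
        + Real.sqrt (4 * (∑ j ∈ G.neighborFinset i, (G.degree j : ℝ))
          - 4 * (lam - mu) * (G.degree i : ℝ) + (lam - mu) ^ 2 - 4 * mu * (n : ℝ))) / 2 :=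
  laplacian_index_upper_bound_general n G hnoncomplete lam mu hlam hmu ℓ₁ hℓ₁
end

section
/- Let G be a simple connected graph on vertex set V = {1,...,n} with at least one pair of distinct nonadjacent vertices, and let λ and μ be real numbers such that every pair of adjacent vertices of G has at least λ common neighbors and every pair of distinct nonadjacent vertices of G has at least μ common neighbors. Then the second-smallest Laplacian eigenvalue satisfies ℓ_{n−1}(G) ≥ min_i { ( 2d_i − λ + μ − sqrt( 4 d_i m_i − 4(λ−μ)d_i + (λ−μ)² − 4μn ) ) / 2 }, where the minimum is taken over those vertices i for which the expression under the square root is nonnegative. -/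
/-!
Let `x ⊥ 𝟙` be a Laplacian eigenvector for `ℓ`, so that `A x = (D - ℓ) x`. The matrix
`M = A² - (λ - μ) A - μ J` is symmetric, and off the diagonal its entries are the excesses of the
common-neighbour counts over `λ` (adjacent pairs) or `μ` (non-adjacent pairs), hence nonnegative.
So `xᵀ M x ≤ ∑ᵢ rᵢ xᵢ²`, where `rᵢ = dᵢ mᵢ - (λ - μ) dᵢ - μ n` are the row sums of `M`.
On the other hand `xᵀ A² x = ‖A x‖²` and `J x = 0` give
`xᵀ M x = ∑ᵢ ((dᵢ - ℓ)² - (λ - μ)(dᵢ - ℓ)) xᵢ²`. Comparing, some `i` satisfies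
`(dᵢ - ℓ)² + (λ - μ) ℓ + μ n ≤ dᵢ mᵢ`, a quadratic inequality in `ℓ` whose smaller root is the
bound.
-/

open Finset Matrix

theorem Matrix.dotProduct_mulVec_le_sum_rowSum_mul_sq {ι : Type*} [Fintype ι]
    {M : Matrix ι ι ℝ} (hM : M.IsSymm) (hoff : ∀ i j, i ≠ j → 0 ≤ M i j) (x : ι → ℝ) :
    x ⬝ᵥ M *ᵥ x ≤ ∑ i, (∑ j, M i j) * x i ^ 2 := by
  have hsymm : ∑ i, ∑ j, M i j * x j ^ 2 = ∑ i, ∑ j, M i j * x i ^ 2 := by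
    rw [Finset.sum_comm]
    exact sum_congr rfl fun i _ => sum_congr rfl fun j _ => by rw [hM.apply j i]
  calc x ⬝ᵥ M *ᵥ x = ∑ i, ∑ j, M i j * (x i * x j) := by
        simp only [dotProduct, mulVec, mul_sum]
        exact sum_congr rfl fun i _ => sum_congr rfl fun j _ => by ring
    _ ≤ ∑ i, ∑ j, M i j * ((x i ^ 2 + x j ^ 2) / 2) := by
        refine sum_le_sum fun i _ => sum_le_sum fun j _ => ?_
        obtain rfl | hij := eq_or_ne i j
        · exact le_of_eq (by ring)
        · exact mul_le_mul_of_nonneg_left (by nlinarith [sq_nonneg (x i - x j)]) (hoff i j hij)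
    _ = (∑ i, ∑ j, M i j * x i ^ 2 + ∑ i, ∑ j, M i j * x j ^ 2) / 2 := by
        simp only [← sum_add_distrib, sum_div]
        exact sum_congr rfl fun i _ => sum_congr rfl fun j _ => by ring
    _ = ∑ i, (∑ j, M i j) * x i ^ 2 := by
        rw [hsymm, add_self_div_two]
        simp only [sum_mul]

theorem exists_nonpos_of_sum_mul_sq_nonpos {ι : Type*} [Fintype ι] {g x : ι → ℝ}
    (hx : x ≠ 0) (h : ∑ i, g i * x i ^ 2 ≤ 0) : ∃ i, g i ≤ 0 := by
  by_contra! hg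
  obtain ⟨i, hi⟩ := Function.ne_iff.mp hx
  have : 0 < ∑ i, g i * x i ^ 2 :=
    sum_pos' (fun j _ => mul_nonneg (hg j).le (sq_nonneg _))
      ⟨i, mem_univ i, mul_pos (hg i) (sq_pos_of_ne_zero hi)⟩
  linarith

theorem sub_sqrt_div_two_le_of_sq_sub_mul_add_nonpos {b c D t : ℝ} (hD : b ^ 2 - 4 * c = D)
    (h : t ^ 2 - b * t + c ≤ 0) : 0 ≤ D ∧ (b - √D) / 2 ≤ t := by
  have hsq : (b - 2 * t) ^ 2 ≤ D := by nlinarith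
  refine ⟨(sq_nonneg _).trans hsq, ?_⟩
  have : b - 2 * t ≤ √D := (le_abs_self _).trans (Real.abs_le_sqrt hsq)
  linarith

namespace SimpleGraph

variable {V : Type*} [Fintype V] (G : SimpleGraph V) [DecidableRel G.Adj]

theorem adjMatrix_mul_self_apply [DecidableEq V] {α : Type*} [NonAssocSemiring α] (v w : V) :
    (G.adjMatrix α * G.adjMatrix α) v w = #(G.neighborFinset v ∩ G.neighborFinset w) := by
  simp only [adjMatrix_mul_apply, adjMatrix_apply, sum_boole]
  congr 2
  ext u
  simp [adj_comm]

theorem sum_adjMatrix_mul_self_apply {α : Type*} [NonAssocSemiring α] (v : V) :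
    ∑ w, (G.adjMatrix α * G.adjMatrix α) v w = ∑ u ∈ G.neighborFinset v, (G.degree u : α) := by
  simp only [adjMatrix_mul_apply]
  rw [sum_comm]
  simp [adjMatrix_apply, sum_boole, ← card_neighborFinset_eq_degree, neighborFinset_eq_filter]

variable {R : Type*} [CommRing R]

theorem adjMatrix_mulVec_eq_of_lapMatrix_mulVec_eq_smul [DecidableEq V] {x : V → R} {t : R}
    (h : G.lapMatrix R *ᵥ x = t • x) :
    G.adjMatrix R *ᵥ x = fun v => (G.degree v - t) * x v := by
  ext v
  have hv := congrFun h v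
  rw [lapMatrix_mulVec_apply, Pi.smul_apply, smul_eq_mul] at hv
  rw [adjMatrix_mulVec_apply]
  linear_combination -hv

def commonNeighborExcess (lam mu : R) : Matrix V V R :=
  G.adjMatrix R * G.adjMatrix R - (lam - mu) • G.adjMatrix R - mu • of fun _ _ => 1

theorem commonNeighborExcess_apply [DecidableEq V] (lam mu : R) (v w : V) :
    G.commonNeighborExcess lam mu v w =
      #(G.neighborFinset v ∩ G.neighborFinset w) - (lam - mu) * G.adjMatrix R v w - mu := by
  simp only [commonNeighborExcess, Matrix.sub_apply, Matrix.smul_apply, of_apply, smul_eq_mul,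
    adjMatrix_mul_self_apply, mul_one]

theorem isSymm_commonNeighborExcess [DecidableEq V] (lam mu : R) :
    (G.commonNeighborExcess lam mu).IsSymm :=
  IsSymm.ext fun v w => by
    rw [commonNeighborExcess_apply, commonNeighborExcess_apply, inter_comm,
      G.isSymm_adjMatrix.apply]

theorem sum_commonNeighborExcess_apply (lam mu : R) (v : V) :
    ∑ w, G.commonNeighborExcess lam mu v w =
      ∑ u ∈ G.neighborFinset v, (G.degree u : R) - (lam - mu) * G.degree v
        - mu * Fintype.card V := by
  simp only [commonNeighborExcess, Matrix.sub_apply, Matrix.smul_apply, of_apply, smul_eq_mul,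
    sum_sub_distrib, ← mul_sum, sum_adjMatrix_mul_self_apply, adjMatrix_apply,
    ← degree_eq_sum_if_adj]
  simp

theorem commonNeighborExcess_apply_nonneg [DecidableEq V] {lam mu : ℝ}
    (hlam : ∀ v w, G.Adj v w → lam ≤ #(G.neighborFinset v ∩ G.neighborFinset w))
    (hmu : ∀ v w, v ≠ w → ¬ G.Adj v w → mu ≤ #(G.neighborFinset v ∩ G.neighborFinset w))
    {v w : V} (hvw : v ≠ w) : 0 ≤ G.commonNeighborExcess lam mu v w := by
  rw [commonNeighborExcess_apply, adjMatrix_apply]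
  by_cases hadj : G.Adj v w
  · simp only [hadj, if_true]; linarith [hlam v w hadj]
  · simp only [hadj, if_false]; linarith [hmu v w hvw hadj]

theorem dotProduct_commonNeighborExcess_mulVec [DecidableEq V] (lam mu : R) {x : V → R} {t : R}
    (hsum : ∑ v, x v = 0) (heig : G.lapMatrix R *ᵥ x = t • x) :
    x ⬝ᵥ G.commonNeighborExcess lam mu *ᵥ x =
      ∑ v, (((G.degree v : R) - t) ^ 2 - (lam - mu) * (G.degree v - t)) * x v ^ 2 := by
  have hJx : (of fun _ _ => (1 : R) : Matrix V V R) *ᵥ x = 0 := by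
    ext v
    simp [mulVec, dotProduct, hsum]
  rw [commonNeighborExcess, sub_mulVec, sub_mulVec, smul_mulVec, smul_mulVec, hJx,
    smul_zero, ← mulVec_mulVec, dotProduct_sub, dotProduct_sub, dotProduct_zero, sub_zero,
    dotProduct_mulVec x (G.adjMatrix R), ← mulVec_transpose, transpose_adjMatrix,
    G.adjMatrix_mulVec_eq_of_lapMatrix_mulVec_eq_smul heig]
  simp only [dotProduct, Pi.smul_apply, smul_eq_mul, ← sum_sub_distrib]
  exact sum_congr rfl fun v _ => by ring

theorem exists_sq_degree_sub_le_sum_degree_of_lapMatrix_mulVec_eq_smul [DecidableEq V]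
    {lam mu : ℝ}
    (hlam : ∀ v w, G.Adj v w → lam ≤ #(G.neighborFinset v ∩ G.neighborFinset w))
    (hmu : ∀ v w, v ≠ w → ¬ G.Adj v w → mu ≤ #(G.neighborFinset v ∩ G.neighborFinset w))
    {x : V → ℝ} {t : ℝ} (hx : x ≠ 0) (hsum : ∑ v, x v = 0) (heig : G.lapMatrix ℝ *ᵥ x = t • x) :
    ∃ v, ((G.degree v : ℝ) - t) ^ 2 + (lam - mu) * t + mu * Fintype.card V
      ≤ ∑ u ∈ G.neighborFinset v, (G.degree u : ℝ) := by
  have key := dotProduct_mulVec_le_sum_rowSum_mul_sq (G.isSymm_commonNeighborExcess lam mu)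
    (fun _ _ => G.commonNeighborExcess_apply_nonneg hlam hmu) x
  rw [G.dotProduct_commonNeighborExcess_mulVec lam mu hsum heig, ← sub_nonpos,
    ← sum_sub_distrib] at key
  simp only [sum_commonNeighborExcess_apply, ← sub_mul] at key
  obtain ⟨v, hv⟩ := exists_nonpos_of_sum_mul_sq_nonpos hx key
  exact ⟨v, by linarith⟩

end SimpleGraph

theorem algebraic_connectivity_lower_bound_general (n : ℕ) (G : SimpleGraph (Fin n))
    [DecidableRel G.Adj]
    (lam mu : ℝ)
    (hlam : ∀ i j : Fin n, G.Adj i j →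
      lam ≤ ((G.neighborFinset i ∩ G.neighborFinset j).card : ℝ))
    (hmu : ∀ i j : Fin n, i ≠ j → ¬ G.Adj i j →
      mu ≤ ((G.neighborFinset i ∩ G.neighborFinset j).card : ℝ))
    (ℓ : ℝ)
    (hℓ : IsLeast {l : ℝ | ∃ X : Fin n → ℝ, X ≠ 0 ∧ (∑ i, X i) = 0 ∧
      (G.lapMatrix ℝ).mulVec X = l • X} ℓ) :
    ∃ i : Fin n,
      0 ≤ 4 * (∑ j ∈ G.neighborFinset i, (G.degree j : ℝ))
          - 4 * (lam - mu) * (G.degree i : ℝ) + (lam - mu) ^ 2 - 4 * mu * (n : ℝ) ∧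
      (2 * (G.degree i : ℝ) - lam + mu
        - Real.sqrt (4 * (∑ j ∈ G.neighborFinset i, (G.degree j : ℝ))
          - 4 * (lam - mu) * (G.degree i : ℝ) + (lam - mu) ^ 2 - 4 * mu * (n : ℝ))) / 2
        ≤ ℓ := by
  obtain ⟨X, hX, hsum, heig⟩ := hℓ.1
  obtain ⟨i, hi⟩ :=
    G.exists_sq_degree_sub_le_sum_degree_of_lapMatrix_mulVec_eq_smul hlam hmu hX hsum heig
  rw [Fintype.card_fin] at hi
  exact ⟨i, sub_sqrt_div_two_le_of_sq_sub_mul_add_nonpos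
    (c := (G.degree i : ℝ) ^ 2 + mu * n - ∑ j ∈ G.neighborFinset i, (G.degree j : ℝ))
    (by ring) (by linarith)⟩

/-- **Corollary (lower bound on the algebraic connectivity).** For a simple connected
non-complete graph `G` and reals `λ ≤ λ(G)`, `μ ≤ μ(G)`, the second-smallest Laplacian
eigenvalue `ℓ_{n−1}(G)` (the least nontrivial Laplacian eigenvalue) satisfies
`ℓ_{n−1}(G) ≥ min_i (2d_i − λ + μ − √(4 d_i m_i − 4(λ−μ)d_i + (λ−μ)² − 4μn))/2`,
the minimum being over vertices with nonnegative radicand. -/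
theorem algebraic_connectivity_lower_bound (n : ℕ) (G : SimpleGraph (Fin n))
    [DecidableRel G.Adj]
    (hconn : G.Connected)
    (hnoncomplete : ∃ i j : Fin n, i ≠ j ∧ ¬ G.Adj i j)
    (lam mu : ℝ)
    (hlam : ∀ i j : Fin n, G.Adj i j →
      lam ≤ ((G.neighborFinset i ∩ G.neighborFinset j).card : ℝ))
    (hmu : ∀ i j : Fin n, i ≠ j → ¬ G.Adj i j →
      mu ≤ ((G.neighborFinset i ∩ G.neighborFinset j).card : ℝ))
    (ℓ : ℝ)
    (hℓ : IsLeast {l : ℝ | ∃ X : Fin n → ℝ, X ≠ 0 ∧ (∑ i, X i) = 0 ∧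
      (G.lapMatrix ℝ).mulVec X = l • X} ℓ) :
    ∃ i : Fin n,
      0 ≤ 4 * (∑ j ∈ G.neighborFinset i, (G.degree j : ℝ))
          - 4 * (lam - mu) * (G.degree i : ℝ) + (lam - mu) ^ 2 - 4 * mu * (n : ℝ) ∧
      (2 * (G.degree i : ℝ) - lam + mu
        - Real.sqrt (4 * (∑ j ∈ G.neighborFinset i, (G.degree j : ℝ))
          - 4 * (lam - mu) * (G.degree i : ℝ) + (lam - mu) ^ 2 - 4 * mu * (n : ℝ))) / 2
        ≤ ℓ :=
  algebraic_connectivity_lower_bound_general n G lam mu hlam hmu ℓ hℓ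
end

section
/- Let G be a simple connected k-regular graph on n ≥ 2 vertices having at least one pair of distinct nonadjacent vertices, and let λ and μ be real numbers such that every pair of adjacent vertices of G has at least λ common neighbors and every pair of distinct nonadjacent vertices of G has at least μ common neighbors. Then the Laplacian spread satisfies 𝒮_L(G) ≤ sqrt( (2k − λ + μ)² − 4μn ). -/
/-!
If `L x = ℓ x` with `x ⊥ 𝟙`, then `A x = θ x` for `θ = k − ℓ`, and `x` is an eigenvector of
`M = A² − (λ − μ)A − μJ + (μ − k)I` with eigenvalue `θ² − (λ − μ)θ + μ − k`. The hypotheses on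
`λ` and `μ` make `M` entrywise nonnegative, and all its row sums equal
`r = k² − (λ − μ)k − μn + μ − k`, so `r` bounds its Rayleigh quotients. Rewritten in `ℓ`, this says
`ℓ² − (2k − λ + μ)ℓ + μn ≤ 0`: both `ℓ₁` and `ℓₙ₋₁` lie between the roots of this quadratic, which
are `√((2k − λ + μ)² − 4μn)` apart. An eigenvector for `ℓ₁` is orthogonal to `𝟙` unless `ℓ₁ = 0`,
and then all Laplacian eigenvalues vanish.
-/

open Finset Matrix

theorem Matrix.dotProduct_mulVec_le_of_nonneg {ι : Type*} [Fintype ι] {C : Matrix ι ι ℝ}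
    (hsymm : C.IsSymm) (hnonneg : ∀ i j, 0 ≤ C i j) {r : ℝ} (hrow : C *ᵥ 1 = r • 1)
    (x : ι → ℝ) : x ⬝ᵥ C *ᵥ x ≤ r * (x ⬝ᵥ x) := by
  have hrow' (i : ι) : ∑ j, C i j = r := by
    simpa [mulVec, dotProduct] using congrFun hrow i
  have hcol (j : ι) : ∑ i, C i j = r := by
    simpa [hsymm.apply] using hrow' j
  have hleft : ∑ i, ∑ j, C i j * x i ^ 2 = r * (x ⬝ᵥ x) := by
    simp [dotProduct, ← sum_mul, hrow', mul_sum, sq]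
  have hright : ∑ i, ∑ j, C i j * x j ^ 2 = r * (x ⬝ᵥ x) := by
    rw [sum_comm]
    simp [dotProduct, ← sum_mul, hcol, mul_sum, sq]
  have hcross : ∑ i, ∑ j, C i j * (x i * x j) = x ⬝ᵥ C *ᵥ x := by
    simp only [dotProduct, mulVec, mul_sum]
    exact sum_congr rfl fun i _ => sum_congr rfl fun j _ => by ring
  have hsq : 0 ≤ ∑ i, ∑ j, C i j * (x i - x j) ^ 2 :=
    sum_nonneg fun i _ => sum_nonneg fun j _ => mul_nonneg (hnonneg i j) (sq_nonneg _)
  have hexpand : ∑ i, ∑ j, C i j * (x i - x j) ^ 2 = ∑ i, ∑ j, C i j * x i ^ 2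
      + ∑ i, ∑ j, C i j * x j ^ 2 - 2 * ∑ i, ∑ j, C i j * (x i * x j) := by
    simp only [mul_sum, ← sum_add_distrib, ← sum_sub_distrib]
    exact sum_congr rfl fun i _ => sum_congr rfl fun j _ => by ring
  linarith

theorem Matrix.of_const_one_mulVec {ι R : Type*} [Fintype ι] [NonAssocSemiring R] (x : ι → R) :
    (of fun _ _ => 1 : Matrix ι ι R) *ᵥ x = fun _ => ∑ i, x i := by
  ext; simp [mulVec, dotProduct]

namespace SimpleGraph

variable {V : Type*} [Fintype V] [DecidableEq V] (G : SimpleGraph V) [DecidableRel G.Adj]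

theorem adjMatrix_mul_self_apply_s8 (i j : V) :
    (G.adjMatrix ℝ * G.adjMatrix ℝ) i j = #(G.neighborFinset i ∩ G.neighborFinset j) := by
  simp only [adjMatrix_mul_apply, adjMatrix_apply, sum_boole, Nat.cast_inj]
  congr 1
  ext u
  simp [adj_comm]

/-- `A² − (λ − μ)A − μJ + (μ − k)I`, where `J` is the all-ones matrix. For a `k`-regular graph its
off-diagonal entries are the common-neighbour counts minus `λ` (adjacent pairs) or `μ` (nonadjacent
pairs), and its diagonal vanishes. -/
noncomputable def excessCommonNeighborsMatrix (k : ℕ) (lam mu : ℝ) : Matrix V V ℝ :=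
  G.adjMatrix ℝ * G.adjMatrix ℝ - (lam - mu) • G.adjMatrix ℝ - mu • of (fun _ _ => 1)
    + (mu - k) • 1

variable {G} {k : ℕ} {lam mu : ℝ}

theorem isSymm_excessCommonNeighborsMatrix : (G.excessCommonNeighborsMatrix k lam mu).IsSymm := by
  have hA := G.isSymm_adjMatrix (α := ℝ)
  have hAA : (G.adjMatrix ℝ * G.adjMatrix ℝ).IsSymm := by
    simpa [hA.eq] using isSymm_transpose_mul_self (G.adjMatrix ℝ)
  have hJ : (of fun _ _ => 1 : Matrix V V ℝ).IsSymm := IsSymm.ext fun _ _ => rfl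
  exact ((hAA.sub (hA.smul _)).sub (hJ.smul _)).add (isSymm_one.smul _)

theorem excessCommonNeighborsMatrix_nonneg (hreg : G.IsRegularOfDegree k)
    (hlam : ∀ i j, G.Adj i j → lam ≤ #(G.neighborFinset i ∩ G.neighborFinset j))
    (hmu : ∀ i j, i ≠ j → ¬ G.Adj i j → mu ≤ #(G.neighborFinset i ∩ G.neighborFinset j))
    (i j : V) : 0 ≤ G.excessCommonNeighborsMatrix k lam mu i j := by
  simp only [excessCommonNeighborsMatrix, Matrix.add_apply, Matrix.sub_apply, Matrix.smul_apply,
    of_apply, one_apply, adjMatrix_mul_self_apply_s8, adjMatrix_apply, smul_eq_mul]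
  rcases eq_or_ne i j with rfl | hij
  · simp [hreg i]
  · by_cases hadj : G.Adj i j
    · have := hlam i j hadj
      simp only [hadj, hij, if_true, if_false]
      linarith
    · simpa [hij, hadj] using hmu i j hij hadj

theorem excessCommonNeighborsMatrix_mulVec_one (hreg : G.IsRegularOfDegree k) :
    G.excessCommonNeighborsMatrix k lam mu *ᵥ 1
      = ((k : ℝ) ^ 2 - (lam - mu) * k - mu * Fintype.card V + mu - k) • 1 := by
  have hA : G.adjMatrix ℝ *ᵥ 1 = (k : ℝ) • 1 := by
    ext v; simp [hreg v]
  rw [excessCommonNeighborsMatrix, add_mulVec, sub_mulVec, sub_mulVec, smul_mulVec, smul_mulVec,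
    smul_mulVec, ← mulVec_mulVec, hA, mulVec_smul, hA, one_mulVec, of_const_one_mulVec]
  ext v
  simp
  ring

theorem excessCommonNeighborsMatrix_mulVec_of_adjMatrix_mulVec {θ : ℝ} {x : V → ℝ}
    (hx : G.adjMatrix ℝ *ᵥ x = θ • x) (hsum : ∑ i, x i = 0) :
    G.excessCommonNeighborsMatrix k lam mu *ᵥ x = (θ ^ 2 - (lam - mu) * θ + mu - k) • x := by
  rw [excessCommonNeighborsMatrix, add_mulVec, sub_mulVec, sub_mulVec, smul_mulVec, smul_mulVec,
    smul_mulVec, ← mulVec_mulVec, hx, mulVec_smul, hx, one_mulVec, of_const_one_mulVec, hsum]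
  ext v
  simp
  ring

theorem adjMatrix_mulVec_of_lapMatrix_mulVec (hreg : G.IsRegularOfDegree k) {ℓ : ℝ}
    {x : V → ℝ} (hx : G.lapMatrix ℝ *ᵥ x = ℓ • x) : G.adjMatrix ℝ *ᵥ x = (k - ℓ) • x := by
  have hD : G.degMatrix ℝ *ᵥ x = (k : ℝ) • x := by
    ext v; simp [degMatrix_mulVec_apply, hreg v]
  rw [lapMatrix, sub_mulVec, hD] at hx
  rw [sub_smul, ← hx, sub_sub_cancel]

theorem sum_eq_zero_of_lapMatrix_mulVec {ℓ : ℝ} (hℓ : ℓ ≠ 0) {x : V → ℝ}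
    (hx : G.lapMatrix ℝ *ᵥ x = ℓ • x) : ∑ i, x i = 0 := by
  have h : 1 ⬝ᵥ G.lapMatrix ℝ *ᵥ x = 0 := by
    have hconst : G.lapMatrix ℝ *ᵥ 1 = 0 := G.lapMatrix_mulVec_const_eq_zero
    rw [dotProduct_mulVec, ← mulVec_transpose, (G.isSymm_lapMatrix ℝ).eq, hconst, zero_dotProduct]
  rw [hx, dotProduct_smul, one_dotProduct, smul_eq_mul] at h
  exact (mul_eq_zero.mp h).resolve_left hℓ

theorem lapMatrix_eigenvalue_nonneg {ℓ : ℝ} {x : V → ℝ} (hx0 : x ≠ 0)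
    (hx : G.lapMatrix ℝ *ᵥ x = ℓ • x) : 0 ≤ ℓ := by
  have hpos : 0 < x ⬝ᵥ x := by simpa using dotProduct_star_self_pos_iff.mpr hx0
  have h := (G.posSemidef_lapMatrix ℝ).dotProduct_mulVec_nonneg x
  rw [star_trivial, hx, dotProduct_smul, smul_eq_mul] at h
  exact nonneg_of_mul_nonneg_left h hpos

theorem lapMatrix_eigenvalue_quadratic_nonpos (hreg : G.IsRegularOfDegree k)
    (hlam : ∀ i j, G.Adj i j → lam ≤ #(G.neighborFinset i ∩ G.neighborFinset j))
    (hmu : ∀ i j, i ≠ j → ¬ G.Adj i j → mu ≤ #(G.neighborFinset i ∩ G.neighborFinset j))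
    {ℓ : ℝ} {x : V → ℝ} (hx0 : x ≠ 0) (hsum : ∑ i, x i = 0)
    (hx : G.lapMatrix ℝ *ᵥ x = ℓ • x) :
    ℓ ^ 2 - (2 * k - lam + mu) * ℓ + mu * Fintype.card V ≤ 0 := by
  have hpos : 0 < x ⬝ᵥ x := by simpa using dotProduct_star_self_pos_iff.mpr hx0
  have hbound := dotProduct_mulVec_le_of_nonneg isSymm_excessCommonNeighborsMatrix
    (excessCommonNeighborsMatrix_nonneg hreg hlam hmu)
    (excessCommonNeighborsMatrix_mulVec_one (lam := lam) (mu := mu) hreg) x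
  rw [excessCommonNeighborsMatrix_mulVec_of_adjMatrix_mulVec
    (adjMatrix_mulVec_of_lapMatrix_mulVec hreg hx) hsum, dotProduct_smul, smul_eq_mul] at hbound
  linarith [le_of_mul_le_mul_right hbound hpos]

end SimpleGraph

theorem sub_le_sqrt_of_quadratic_nonpos {b c x y : ℝ} (hx : x ^ 2 - b * x + c ≤ 0)
    (hy : y ^ 2 - b * y + c ≤ 0) : x - y ≤ √(b ^ 2 - 4 * c) := by
  have hx' := abs_le.mp (Real.abs_le_sqrt (x := 2 * x - b) (y := b ^ 2 - 4 * c) (by nlinarith))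
  have hy' := abs_le.mp (Real.abs_le_sqrt (x := 2 * y - b) (y := b ^ 2 - 4 * c) (by nlinarith))
  linarith [hx'.2, hy'.1]

theorem laplacian_spread_regular_bound_general (n k : ℕ)
    (G : SimpleGraph (Fin n)) [DecidableRel G.Adj]
    (hreg : G.IsRegularOfDegree k)
    (lam mu : ℝ)
    (hlam : ∀ i j : Fin n, G.Adj i j →
      lam ≤ ((G.neighborFinset i ∩ G.neighborFinset j).card : ℝ))
    (hmu : ∀ i j : Fin n, i ≠ j → ¬ G.Adj i j →
      mu ≤ ((G.neighborFinset i ∩ G.neighborFinset j).card : ℝ))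
    (ℓ₁ ℓₙ₁ : ℝ)
    (hℓ₁ : IsGreatest {l : ℝ | ∃ X : Fin n → ℝ, X ≠ 0 ∧
      (G.lapMatrix ℝ).mulVec X = l • X} ℓ₁)
    (hℓₙ₁ : IsLeast {l : ℝ | ∃ X : Fin n → ℝ, X ≠ 0 ∧ (∑ i, X i) = 0 ∧
      (G.lapMatrix ℝ).mulVec X = l • X} ℓₙ₁) :
    ℓ₁ - ℓₙ₁ ≤ Real.sqrt ((2 * (k : ℝ) - lam + mu) ^ 2 - 4 * mu * (n : ℝ)) := by
  obtain ⟨X, hX0, hX⟩ := hℓ₁.1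
  obtain ⟨Y, hY0, hYsum, hY⟩ := hℓₙ₁.1
  have hquad {ℓ : ℝ} {x : Fin n → ℝ} (hx0 : x ≠ 0) (hsum : ∑ i, x i = 0)
      (hx : G.lapMatrix ℝ *ᵥ x = ℓ • x) : ℓ ^ 2 - (2 * k - lam + mu) * ℓ + mu * n ≤ 0 := by
    simpa using G.lapMatrix_eigenvalue_quadratic_nonpos hreg hlam hmu hx0 hsum hx
  rcases eq_or_ne ℓ₁ 0 with h0 | h0
  · have := G.lapMatrix_eigenvalue_nonneg hY0 hY
    exact (by linarith : ℓ₁ - ℓₙ₁ ≤ 0).trans (Real.sqrt_nonneg _)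
  · have hXsum := G.sum_eq_zero_of_lapMatrix_mulVec h0 hX
    convert sub_le_sqrt_of_quadratic_nonpos (hquad hX0 hXsum hX) (hquad hY0 hYsum hY) using 3
    ring

/-- **Corollary.** For a simple connected non-complete `k`-regular graph `G` on
`n ≥ 2` vertices and reals `λ ≤ λ(G)`, `μ ≤ μ(G)`, the Laplacian spread satisfies
`𝒮_L(G) ≤ √((2k − λ + μ)² − 4μn)`. -/
theorem laplacian_spread_regular_bound (n k : ℕ) (hn : 2 ≤ n)
    (G : SimpleGraph (Fin n)) [DecidableRel G.Adj]
    (hconn : G.Connected)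
    (hreg : G.IsRegularOfDegree k)
    (hnoncomplete : ∃ i j : Fin n, i ≠ j ∧ ¬ G.Adj i j)
    (lam mu : ℝ)
    (hlam : ∀ i j : Fin n, G.Adj i j →
      lam ≤ ((G.neighborFinset i ∩ G.neighborFinset j).card : ℝ))
    (hmu : ∀ i j : Fin n, i ≠ j → ¬ G.Adj i j →
      mu ≤ ((G.neighborFinset i ∩ G.neighborFinset j).card : ℝ))
    (ℓ₁ ℓₙ₁ : ℝ)
    (hℓ₁ : IsGreatest {l : ℝ | ∃ X : Fin n → ℝ, X ≠ 0 ∧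
      (G.lapMatrix ℝ).mulVec X = l • X} ℓ₁)
    (hℓₙ₁ : IsLeast {l : ℝ | ∃ X : Fin n → ℝ, X ≠ 0 ∧ (∑ i, X i) = 0 ∧
      (G.lapMatrix ℝ).mulVec X = l • X} ℓₙ₁) :
    ℓ₁ - ℓₙ₁ ≤ Real.sqrt ((2 * (k : ℝ) - lam + mu) ^ 2 - 4 * mu * (n : ℝ)) :=
  laplacian_spread_regular_bound_general n k G hreg lam mu hlam hmu ℓ₁ ℓₙ₁ hℓ₁ hℓₙ₁
end
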